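/- arXiv:1212.3462 — 3 statements merged into one kernel-verified Lean document; each statement's English description precedes it below -/
import Mathlib

section
/- In the Hopf algebra 𝒯_κ, an element A satisfies Δ(A) = A' ⊗ 1 + ℰ ⊗ A for some A' ∈ 𝒯_κ if and only if A is a linear combination of 1, ℰ, and P₁. -/
/-!
Write `A = ∑ a_{ijk} P₀^i P₁^j ℰ^k`. The coproduct of a basis monomial is the binomial sum
`Δ(P₀^i P₁^j ℰ^k) = ∑_{r,s} C(i,r) C(j,s) P₀^r P₁^s ℰ^{k+j-s} ⊗ P₀^{i-r} P₁^{j-s} ℰ^k`,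
and distinct `(i, j, k, r, s)` give distinct basis tensors. Comparing the coefficient of such a
tensor whose right factor is not `1` on both sides of `Δ A = A' ⊗ 1 + ℰ ⊗ A` gives
`a_{ijk} C(i,r) C(j,s) = [ (r, s, k+j-s) = (0,0,1) ] a_{i-r, j-s, k}`.
Taking the right factor to be `ℰ^k` (if `k ≠ 0`), `P₀` (if `k = 0 < i`) or `P₁` (if `k = i = 0`,
`j ≥ 2`) leaves a left factor other than `ℰ`, so the right-hand side vanishes while the binomial
coefficient is nonzero in characteristic zero; hence only `a_{000}`, `a_{001}`, `a_{010}` survive.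
-/

open TensorProduct

/-- Integer powers ℰ^m in terms of ℰ and its inverse ℰ⁻¹. -/
noncomputable def Epow {T : Type*} [CommRing T] (E Einv : T) : ℤ → T
  | Int.ofNat n => E ^ n
  | Int.negSucc n => Einv ^ (n + 1)

section Epow

variable {T : Type*} [CommRing T]

theorem epow_eq_units_zpow {E Einv : T} (hE : E * Einv = 1) (k : ℤ) :
    Epow E Einv k = ↑(Units.mkOfMulEqOne E Einv hE ^ k) := by
  cases k with
  | ofNat n => simp [Epow]
  | negSucc n => simp [Epow, zpow_negSucc]; rfl

theorem epow_mul_pow {E Einv : T} (hE : E * Einv = 1) (k : ℤ) (s : ℕ) :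
    Epow E Einv k * E ^ s = Epow E Einv (k + s) := by
  simp [epow_eq_units_zpow hE, zpow_add, Units.val_pow_eq_pow_val]

theorem map_epow {S F : Type*} [CommRing S] [FunLike F T S] [MonoidHomClass F T S] (f : F)
    (E Einv : T) (k : ℤ) : f (Epow E Einv k) = Epow (f E) (f Einv) k := by
  cases k <;> simp [Epow]

theorem epow_tmul {R A B : Type*} [CommRing R] [CommRing A] [Algebra R A] [CommRing B]
    [Algebra R B] (x x' : A) (y y' : B) (k : ℤ) :
    Epow (x ⊗ₜ[R] y) (x' ⊗ₜ[R] y') k = Epow x x' k ⊗ₜ Epow y y' k := by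
  cases k <;> simp [Epow, Algebra.TensorProduct.tmul_pow]

end Epow

theorem tmul_one_add_tmul_pow {R A B : Type*} [CommRing R] [CommRing A] [Algebra R A]
    [CommRing B] [Algebra R B] (a c : A) (d : B) (n : ℕ) :
    (a ⊗ₜ[R] (1 : B) + c ⊗ₜ d) ^ n =
      ∑ s ∈ Finset.range (n + 1), n.choose s • ((a ^ s * c ^ (n - s)) ⊗ₜ (d ^ (n - s))) := by
  rw [add_pow]
  refine Finset.sum_congr rfl fun s _ => ?_
  rw [Algebra.TensorProduct.tmul_pow, Algebra.TensorProduct.tmul_pow, one_pow,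
    Algebra.TensorProduct.tmul_mul_tmul, one_mul, nsmul_eq_mul, Nat.cast_comm]

theorem eq_of_coproduct_index_eq {i j i' j' r s r' s' : ℕ} {k k' : ℤ} (hr : r ≤ i)
    (hs : s ≤ j) (hr' : r' ≤ i') (hs' : s' ≤ j')
    (h : (((r', s', k' + (j' - s' : ℕ)), (i' - r', j' - s', k')) : (ℕ × ℕ × ℤ) × (ℕ × ℕ × ℤ)) =
      ((r, s, k + (j - s : ℕ)), (i - r, j - s, k))) :
    ((i', j', k') : ℕ × ℕ × ℤ) = (i, j, k) := by
  simp only [Prod.ext_iff] at h ⊢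
  omega

section Basis

variable {K T ι : Type*} [CommRing K] [CommRing T] [Algebra K T] (b : Module.Basis ι K T)

theorem tensorProduct_repr_tmul_one_add_tmul [DecidableEq ι] {o e : ι} {E : T} (h1 : b o = 1)
    (hE : b e = E) (A A' : T) (x : ι) {y : ι} (hy : y ≠ o) :
    (b.tensorProduct b).repr (A' ⊗ₜ[K] 1 + E ⊗ₜ[K] A) (x, y) =
      if x = e then b.repr A y else 0 := by
  simp [← h1, ← hE, Finsupp.single_apply, hy.symm, eq_comm (a := e)]

theorem eq_repr_smul_add_of_repr_eq_zero {o e p : ι} (heo : e ≠ o) (hpo : p ≠ o) (hpe : p ≠ e)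
    {A : T} (hA : ∀ n, n ≠ o → n ≠ e → n ≠ p → b.repr A n = 0) :
    A = b.repr A o • b o + b.repr A e • b e + b.repr A p • b p := by
  refine b.ext_elem fun n => ?_
  by_cases hno : n = o
  · subst hno; simp [heo, hpo]
  by_cases hne : n = e
  · subst hne; simp [heo.symm, hpe]
  by_cases hnp : n = p
  · subst hnp; simp [hpo.symm, hpe.symm]
  simp [hA n hno hne hnp, Ne.symm hno, Ne.symm hne, Ne.symm hnp]

end Basis

section MonomialBasis

variable {K T : Type*} [CommRing K] [CommRing T] [Algebra K T] {P0 P1 E Einv : T}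
  {b : Module.Basis (ℕ × ℕ × ℤ) K T}
  (hb : ∀ i j : ℕ, ∀ k : ℤ, b (i, j, k) = P0 ^ i * P1 ^ j * Epow E Einv k)
include hb

theorem basis_eq_one : b (0, 0, 0) = 1 := by
  rw [hb]; simp [Epow]

theorem basis_eq_E : b (0, 0, 1) = E := by
  rw [hb]; simp [Epow]

theorem basis_eq_P1 : b (0, 1, 0) = P1 := by
  rw [hb]; simp [Epow]

end MonomialBasis

section Coproduct

variable {K T : Type*} [CommRing K] [CommRing T] [Algebra K T] {P0 P1 E Einv : T}
  {Δ : T →ₐ[K] T ⊗[K] T}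

theorem coproduct_smul_one_add_smul_add_smul (hΔP1 : Δ P1 = P1 ⊗ₜ[K] 1 + E ⊗ₜ[K] P1)
    (hΔE : Δ E = E ⊗ₜ[K] E) (c1 c2 c3 : K) :
    Δ (c1 • 1 + c2 • E + c3 • P1) =
      (c1 • 1 - c1 • E + c3 • P1) ⊗ₜ[K] 1 + E ⊗ₜ[K] (c1 • 1 + c2 • E + c3 • P1) := by
  simp only [map_add, map_smul, map_one, hΔE, hΔP1, Algebra.TensorProduct.one_def, smul_add,
    add_tmul, sub_tmul, tmul_add, tmul_smul, smul_tmul']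
  module

variable (hE : E * Einv = 1) (hΔP0 : Δ P0 = P0 ⊗ₜ[K] 1 + 1 ⊗ₜ[K] P0)
  (hΔP1 : Δ P1 = P1 ⊗ₜ[K] 1 + E ⊗ₜ[K] P1) (hΔE : Δ E = E ⊗ₜ[K] E)
  (hΔEinv : Δ Einv = Einv ⊗ₜ[K] Einv)
include hE hΔP0 hΔP1 hΔE hΔEinv

theorem coproduct_monomial (i j : ℕ) (k : ℤ) :
    Δ (P0 ^ i * P1 ^ j * Epow E Einv k) =
      ∑ r ∈ Finset.range (i + 1), ∑ s ∈ Finset.range (j + 1),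
        (i.choose r * j.choose s) • ((P0 ^ r * P1 ^ s * Epow E Einv (k + (j - s : ℕ))) ⊗ₜ[K]
          (P0 ^ (i - r) * P1 ^ (j - s) * Epow E Einv k)) := by
  rw [map_mul, map_mul, map_pow, map_pow, map_epow, hΔP0, hΔP1, hΔE, hΔEinv, epow_tmul,
    tmul_one_add_tmul_pow, tmul_one_add_tmul_pow, Finset.sum_mul_sum, Finset.sum_mul]
  refine Finset.sum_congr rfl fun r _ => ?_
  rw [Finset.sum_mul]
  refine Finset.sum_congr rfl fun s _ => ?_
  rw [smul_mul_smul_comm, smul_mul_assoc, Algebra.TensorProduct.tmul_mul_tmul,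
    Algebra.TensorProduct.tmul_mul_tmul, ← epow_mul_pow hE]
  congr 2
  ring

variable {b : Module.Basis (ℕ × ℕ × ℤ) K T}
  (hb : ∀ i j : ℕ, ∀ k : ℤ, b (i, j, k) = P0 ^ i * P1 ^ j * Epow E Einv k)
include hb

theorem coord_comp_coproduct {i j r s : ℕ} (k : ℤ) (hr : r ≤ i) (hs : s ≤ j) :
    (b.tensorProduct b).coord ((r, s, k + (j - s : ℕ)), (i - r, j - s, k)) ∘ₗ Δ.toLinearMap =
      (i.choose r * j.choose s : K) • b.coord (i, j, k) := by
  refine b.ext fun ⟨i', j', k'⟩ => ?_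
  have hΔb : Δ (b (i', j', k')) = ∑ r' ∈ Finset.range (i' + 1), ∑ s' ∈ Finset.range (j' + 1),
      (i'.choose r' * j'.choose s') •
        (b (r', s', k' + (j' - s' : ℕ)) ⊗ₜ[K] b (i' - r', j' - s', k')) := by
    simp only [hb]
    exact coproduct_monomial hE hΔP0 hΔP1 hΔE hΔEinv i' j' k'
  simp only [LinearMap.comp_apply, AlgHom.toLinearMap_apply, hΔb, map_sum, map_nsmul,
    ← Module.Basis.tensorProduct_apply, Module.Basis.coord_apply, Module.Basis.repr_self,
    Finsupp.single_apply, LinearMap.smul_apply]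
  by_cases hn : ((i', j', k') : ℕ × ℕ × ℤ) = (i, j, k)
  · obtain ⟨rfl, rfl, rfl⟩ := Prod.ext_iff.mp hn
    rw [Finset.sum_eq_single_of_mem r (by simpa [Nat.lt_succ_iff]) fun r' _ hne =>
        Finset.sum_eq_zero fun s' _ => by simp [hne],
      Finset.sum_eq_single_of_mem s (by simpa [Nat.lt_succ_iff]) fun s' _ hne => by simp [hne]]
    simp
  · rw [if_neg hn, smul_zero]
    exact Finset.sum_eq_zero fun r' hr' => Finset.sum_eq_zero fun s' hs' => by
      rw [if_neg fun h => hn (eq_of_coproduct_index_eq hr hs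
        (Nat.lt_succ_iff.mp (Finset.mem_range.mp hr'))
        (Nat.lt_succ_iff.mp (Finset.mem_range.mp hs')) h), smul_zero]

theorem repr_mul_choose_eq {A A' : T} (h : Δ A = A' ⊗ₜ[K] 1 + E ⊗ₜ[K] A) {i j : ℕ} (k : ℤ)
    {r s : ℕ} (hr : r ≤ i) (hs : s ≤ j) (hne : ((i - r, j - s, k) : ℕ × ℕ × ℤ) ≠ (0, 0, 0)) :
    b.repr A (i, j, k) * (i.choose r * j.choose s) =
      if ((r, s, k + (j - s : ℕ)) : ℕ × ℕ × ℤ) = (0, 0, 1) then b.repr A (i - r, j - s, k)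
      else 0 := by
  have hcoeff := LinearMap.congr_fun
    (coord_comp_coproduct hE hΔP0 hΔP1 hΔE hΔEinv hb k hr hs) A
  rw [LinearMap.comp_apply, AlgHom.toLinearMap_apply, h, Module.Basis.coord_apply,
    tensorProduct_repr_tmul_one_add_tmul b (basis_eq_one hb) (basis_eq_E hb) A A' _ hne,
    LinearMap.smul_apply, Module.Basis.coord_apply, smul_eq_mul] at hcoeff
  rw [mul_comm, hcoeff]

theorem repr_eq_zero_of_coproduct_eq [IsDomain K] [CharZero K] {A A' : T}
    (h : Δ A = A' ⊗ₜ[K] 1 + E ⊗ₜ[K] A) (n : ℕ × ℕ × ℤ) (h0 : n ≠ (0, 0, 0))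
    (h1 : n ≠ (0, 0, 1)) (h2 : n ≠ (0, 1, 0)) :
    b.repr A n = 0 := by
  obtain ⟨i, j, k⟩ := n
  have key := repr_mul_choose_eq (i := i) (j := j) hE hΔP0 hΔP1 hΔE hΔEinv hb h
  rcases eq_or_ne k 0 with rfl | hk
  · rcases Nat.eq_zero_or_pos i with rfl | hi
    · obtain ⟨j, rfl⟩ : ∃ j', j = j' + 2 := ⟨j - 2, by simp [Prod.ext_iff] at h0 h2; omega⟩
      have hcoeff := key 0 (r := 0) (s := j + 1) le_rfl (by omega) (by simp)
      simp [Prod.ext_iff, Nat.choose_succ_self_right] at hcoeff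
      exact hcoeff.resolve_right (by norm_cast)
    · have hcoeff := key 0 (r := i - 1) (s := j) (by omega) le_rfl (by simp; omega)
      simp [Prod.ext_iff] at hcoeff
      exact hcoeff.resolve_right (Nat.choose_pos (by omega)).ne'
  · have hcoeff := key k (r := i) (s := j) le_rfl le_rfl (by simpa using hk)
    simpa [h1] using hcoeff

end Coproduct

/-- In the Hopf algebra 𝒯_κ, an element A satisfies
Δ(A) = A' ⊗ 1 + ℰ ⊗ A for some A' if and only if A is a linear combination
of 1, ℰ and P₁. -/
theorem stmt14 (T : Type*) [CommRing T] [Algebra ℂ T]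
    (P0 P1 E Einv : T) (hE : E * Einv = 1)
    (b : Module.Basis (ℕ × ℕ × ℤ) ℂ T)
    (hb : ∀ i j : ℕ, ∀ k : ℤ, b (i, j, k) = P0 ^ i * P1 ^ j * Epow E Einv k)
    (Δ : T →ₐ[ℂ] T ⊗[ℂ] T)
    (hΔP0 : Δ P0 = P0 ⊗ₜ[ℂ] 1 + 1 ⊗ₜ[ℂ] P0)
    (hΔP1 : Δ P1 = P1 ⊗ₜ[ℂ] 1 + E ⊗ₜ[ℂ] P1)
    (hΔE : Δ E = E ⊗ₜ[ℂ] E)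
    (hΔEinv : Δ Einv = Einv ⊗ₜ[ℂ] Einv)
    (A : T) :
    (∃ A' : T, Δ A = A' ⊗ₜ[ℂ] 1 + E ⊗ₜ[ℂ] A) ↔
      ∃ c1 c2 c3 : ℂ, A = c1 • (1 : T) + c2 • E + c3 • P1 := by
  constructor
  · rintro ⟨A', h⟩
    have hA := eq_repr_smul_add_of_repr_eq_zero b (by decide) (by decide) (by decide)
      (repr_eq_zero_of_coproduct_eq hE hΔP0 hΔP1 hΔE hΔEinv hb h)
    rw [basis_eq_one hb, basis_eq_E hb, basis_eq_P1 hb] at hA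
    exact ⟨_, _, _, hA⟩
  · rintro ⟨c1, c2, c3, rfl⟩
    exact ⟨_, coproduct_smul_one_add_smul_add_smul hΔP1 hΔE c1 c2 c3⟩
end

section
/- D₀^{eq}(p) = λ⁻¹sinh(λp₀) - (λ/2)e^{λp₀}p₁² and D₁^{eq}(p) = e^{λp₀}p₁ satisfy (D₀^{eq})² + (D₁^{eq})² = 𝒞 + (λ²/4)𝒞², where 𝒞(p) = (4/λ²)sinh²(λp₀/2) + e^{λp₀}p₁². -/
/-- With D₀^{eq} = λ⁻¹ sinh(λp₀) - (λ/2) e^{λp₀} p₁² and D₁^{eq} = e^{λp₀} p₁,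
one has (D₀^{eq})² + (D₁^{eq})² = 𝒞 + (λ²/4) 𝒞², where
𝒞 = (4/λ²) sinh²(λp₀/2) + e^{λp₀} p₁² is the κ-Poincaré Casimir. -/
theorem stmt17 (lam : ℝ) (hlam : 0 < lam) (p0 p1 : ℝ) :
    (Real.sinh (lam * p0) / lam - lam / 2 * Real.exp (lam * p0) * p1 ^ 2) ^ 2
        + (Real.exp (lam * p0) * p1) ^ 2
      = (4 / lam ^ 2 * Real.sinh (lam * p0 / 2) ^ 2 + Real.exp (lam * p0) * p1 ^ 2)
        + lam ^ 2 / 4 *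
          (4 / lam ^ 2 * Real.sinh (lam * p0 / 2) ^ 2 + Real.exp (lam * p0) * p1 ^ 2) ^ 2 := by
  have hx : Real.exp (lam * p0) = Real.exp (lam * p0 / 2) ^ 2 := by
    rw [sq, ← Real.exp_add]; ring_nf
  have hxpos : (0:ℝ) < Real.exp (lam * p0 / 2) := Real.exp_pos _
  rw [Real.sinh_eq, Real.sinh_eq, Real.exp_neg, Real.exp_neg, hx]
  field_simp
  ring
end

section
/- For μ > 0, the function c(s) = (2π)⁻² ∫_{ℝ²} e^{-λξ₀}(λ⁻²(1-e^{-λξ₀})² + ξ₁² + μ²)^{-s/2} d²ξ is finite for s > 2, and lim_{s→2⁺} (s-2)·c(s) = 1/(4π), independently of μ and λ. -/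
/-!
The substitution `u = λ⁻¹ (1 - e^{-λ ξ₀})` has `du = e^{-λ ξ₀} dξ₀` and maps `ℝ` onto
`(-∞, λ⁻¹)`, so the integral becomes that of `(u² + ξ₁² + μ²)^{-s/2}` over the half-plane
`u < λ⁻¹`. By the symmetry `u ↦ -u` and polar coordinates, the part `u < 0` is exactly
`π μ^{2-s} / (s - 2)`, while on the strip `0 ≤ u < λ⁻¹` the `ξ₁`-integral is at most `π μ^{1-s}`
uniformly in `u`. Hence `(s - 2) ∫ → π` as `s → 2⁺`, and the prefactor `(2π)⁻²` gives `1 / (4π)`.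
-/

open MeasureTheory

/-- c(s) = (2π)⁻² ∫ e^{-λξ₀} (λ⁻²(1-e^{-λξ₀})² + ξ₁² + μ²)^{-s/2} d²ξ, the
weighted trace density of Δ_ω(𝒟²+μ²)^{-s/2}. -/
noncomputable def cFun (lam mu s : ℝ) : ℝ :=
  (2 * Real.pi) ^ (-2 : ℤ) * ∫ ξ : ℝ × ℝ,
    Real.exp (-lam * ξ.1) *
      (lam⁻¹ ^ 2 * (1 - Real.exp (-lam * ξ.1)) ^ 2 + ξ.2 ^ 2 + mu ^ 2) ^ (-s / 2 : ℝ)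

open Set Filter Real
open scoped ENNReal Topology

theorem lintegral_comp_sq_add_sq {g : ℝ → ℝ≥0∞} (hg : Measurable g) :
    ∫⁻ p : ℝ × ℝ, g (p.1 ^ 2 + p.2 ^ 2)
      = ENNReal.ofReal (2 * π) * ∫⁻ r in Ioi 0, ENNReal.ofReal r * g (r ^ 2) := by
  have hpolar : ∀ p : ℝ × ℝ,
      (polarCoord.symm p).1 ^ 2 + (polarCoord.symm p).2 ^ 2 = p.1 ^ 2 := by
    intro p
    simp only [polarCoord_symm_apply]
    linear_combination p.1 ^ 2 * sin_sq_add_cos_sq p.2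
  rw [← lintegral_comp_polarCoord_symm]
  simp only [hpolar, smul_eq_mul, polarCoord_target, Measure.volume_eq_prod,
    ← Measure.prod_restrict]
  rw [lintegral_prod _ (by fun_prop)]
  simp_rw [lintegral_const, Measure.restrict_apply MeasurableSet.univ,
    univ_inter, Real.volume_Ioo, sub_neg_eq_add, ← two_mul]
  rw [lintegral_mul_const' _ _ ENNReal.ofReal_ne_top, mul_comm]

theorem lintegral_eq_two_mul_setLIntegral_Iio_of_even {g : ℝ → ℝ≥0∞}
    (hg : ∀ x, g (-x) = g x) :
    ∫⁻ x, g x = 2 * ∫⁻ x in Iio 0, g x := by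
  have hneg : ∫⁻ x in Ioi 0, g x = ∫⁻ x in Iio 0, g x := by
    have h := (Measure.measurePreserving_neg (volume : Measure ℝ)).setLIntegral_comp_preimage_emb
      (Homeomorph.neg ℝ).measurableEmbedding g (Iio 0)
    rw [show Neg.neg ⁻¹' Iio (0 : ℝ) = Ioi 0 by ext; simp] at h
    simpa only [hg] using h
  rw [← lintegral_add_compl g measurableSet_Iio, compl_Iio, setLIntegral_congr Ioi_ae_eq_Ici.symm,
    hneg, two_mul]

noncomputable def sliceLIntegral (mu s u : ℝ) : ℝ≥0∞ :=
  ∫⁻ v : ℝ, ENNReal.ofReal ((u ^ 2 + v ^ 2 + mu ^ 2) ^ (-s / 2))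

section Slice

variable {mu s : ℝ}

theorem setLIntegral_Ioi_ofReal_mul_rpow (hmu : 0 < mu) (hs : 2 < s) :
    ∫⁻ r in Ioi 0, ENNReal.ofReal r * ENNReal.ofReal ((r ^ 2 + mu ^ 2) ^ (-s / 2))
      = ENNReal.ofReal (mu ^ (2 - s) / (s - 2)) := by
  set H : ℝ → ℝ := fun r => (r ^ 2 + mu ^ 2) ^ ((2 - s) / 2) / (2 - s)
  have hderiv : ∀ r, HasDerivAt H (r * (r ^ 2 + mu ^ 2) ^ (-s / 2)) r := by
    intro r
    have hsq : HasDerivAt (fun r : ℝ => r ^ 2 + mu ^ 2) (2 * r) r := by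
      simpa using (hasDerivAt_pow 2 r).add_const (mu ^ 2)
    refine ((hsq.rpow_const (p := (2 - s) / 2) (Or.inl (by positivity))).div_const
      (2 - s)).congr_deriv ?_
    rw [show (2 - s) / 2 - 1 = -s / 2 by ring]
    field_simp [show (2 - s) ≠ 0 by linarith]
  have hlim : Tendsto H atTop (𝓝 0) := by
    have hbase : Tendsto (fun r : ℝ => r ^ 2 + mu ^ 2) atTop atTop :=
      tendsto_atTop_add_const_right _ _ (tendsto_pow_atTop two_ne_zero)
    have hpow := (tendsto_rpow_neg_atTop (y := (s - 2) / 2) (by linarith)).comp hbase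
    simpa [H, show -((s - 2) / 2) = (2 - s) / 2 by ring] using hpow.div_const (2 - s)
  have hnonneg : ∀ r ∈ Ioi (0 : ℝ), 0 ≤ r * (r ^ 2 + mu ^ 2) ^ (-s / 2) := fun r hr => by
    have : 0 ≤ r := le_of_lt (mem_Ioi.1 hr)
    positivity
  have hcont : ContinuousWithinAt H (Ici 0) 0 := (hderiv 0).continuousAt.continuousWithinAt
  have hH0 : H 0 = mu ^ (2 - s) / (2 - s) := by
    simp only [H, zero_pow two_ne_zero, zero_add, ← rpow_natCast_mul hmu.le]
    congr 2
    push_cast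
    ring
  calc ∫⁻ r in Ioi 0, ENNReal.ofReal r * ENNReal.ofReal ((r ^ 2 + mu ^ 2) ^ (-s / 2))
      = ∫⁻ r in Ioi 0, ENNReal.ofReal (r * (r ^ 2 + mu ^ 2) ^ (-s / 2)) :=
        setLIntegral_congr_fun measurableSet_Ioi fun r hr => (ENNReal.ofReal_mul hr.le).symm
    _ = ENNReal.ofReal (∫ r in Ioi 0, r * (r ^ 2 + mu ^ 2) ^ (-s / 2)) :=
        (ofReal_integral_eq_lintegral_ofReal
          (integrableOn_Ioi_deriv_of_nonneg hcont (fun r _ => hderiv r) hnonneg hlim)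
          ((ae_restrict_iff' measurableSet_Ioi).2 (ae_of_all _ hnonneg))).symm
    _ = ENNReal.ofReal (mu ^ (2 - s) / (s - 2)) := by
        rw [integral_Ioi_of_hasDerivAt_of_nonneg hcont (fun r _ => hderiv r) hnonneg hlim, hH0,
          zero_sub, ← div_neg, neg_sub]

theorem lintegral_inv_sq_add_sq (hmu : 0 < mu) :
    ∫⁻ v : ℝ, ENNReal.ofReal ((v ^ 2 + mu ^ 2)⁻¹) = ENNReal.ofReal (π / mu) := by
  have hpdf : ∀ v : ℝ, ENNReal.ofReal ((v ^ 2 + mu ^ 2)⁻¹)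
      = ENNReal.ofReal (π / mu) * ProbabilityTheory.cauchyPDF 0 mu.toNNReal v := by
    intro v
    rw [ProbabilityTheory.cauchyPDF_def, ProbabilityTheory.cauchyPDFReal_def,
      Real.coe_toNNReal _ hmu.le, ← ENNReal.ofReal_mul (by positivity)]
    congr 1
    field_simp [pi_ne_zero]
    ring
  rw [lintegral_congr hpdf, lintegral_const_mul' _ _ ENNReal.ofReal_ne_top,
    ProbabilityTheory.lintegral_cauchyPDF_eq_one 0 (by simpa using hmu), mul_one]

theorem lintegral_sliceLIntegral (hmu : 0 < mu) (hs : 2 < s) :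
    ∫⁻ u, sliceLIntegral mu s u = ENNReal.ofReal (2 * π * (mu ^ (2 - s) / (s - 2))) := by
  have htonelli := lintegral_prod (μ := volume) (ν := volume)
    (fun p : ℝ × ℝ => ENNReal.ofReal ((p.1 ^ 2 + p.2 ^ 2 + mu ^ 2) ^ (-s / 2))) (by fun_prop)
  rw [← Measure.volume_eq_prod] at htonelli
  refine htonelli.symm.trans ?_
  rw [lintegral_comp_sq_add_sq (g := fun x => ENNReal.ofReal ((x + mu ^ 2) ^ (-s / 2)))
      (by fun_prop),
    setLIntegral_Ioi_ofReal_mul_rpow hmu hs, ← ENNReal.ofReal_mul (by positivity)]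

theorem setLIntegral_Iio_sliceLIntegral (hmu : 0 < mu) (hs : 2 < s) :
    ∫⁻ u in Iio 0, sliceLIntegral mu s u = ENNReal.ofReal (π * (mu ^ (2 - s) / (s - 2))) := by
  have h := lintegral_sliceLIntegral hmu hs
  rw [lintegral_eq_two_mul_setLIntegral_Iio_of_even fun u => by simp only [sliceLIntegral, neg_sq],
    mul_assoc, ENNReal.ofReal_mul zero_le_two, ENNReal.ofReal_ofNat] at h
  exact (ENNReal.mul_right_inj two_ne_zero ENNReal.ofNat_ne_top).1 h

theorem sliceLIntegral_le (hmu : 0 < mu) (hs : 2 ≤ s) (u : ℝ) :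
    sliceLIntegral mu s u ≤ ENNReal.ofReal (π * mu ^ (1 - s)) := by
  have hpoint : ∀ v : ℝ,
      (u ^ 2 + v ^ 2 + mu ^ 2) ^ (-s / 2) ≤ mu ^ (2 - s) * (v ^ 2 + mu ^ 2)⁻¹ := by
    intro v
    have hv : 0 < v ^ 2 + mu ^ 2 := by positivity
    calc (u ^ 2 + v ^ 2 + mu ^ 2) ^ (-s / 2)
        ≤ (v ^ 2 + mu ^ 2) ^ (-s / 2) :=
          rpow_le_rpow_of_nonpos hv (by nlinarith [sq_nonneg u]) (by linarith)
      _ = (v ^ 2 + mu ^ 2) ^ ((2 - s) / 2) * (v ^ 2 + mu ^ 2)⁻¹ := by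
          rw [← rpow_neg_one, ← rpow_add hv]
          ring_nf
      _ ≤ (mu ^ 2) ^ ((2 - s) / 2) * (v ^ 2 + mu ^ 2)⁻¹ :=
          mul_le_mul_of_nonneg_right (rpow_le_rpow_of_nonpos (by positivity)
            (by nlinarith [sq_nonneg v]) (by linarith)) (by positivity)
      _ = mu ^ (2 - s) * (v ^ 2 + mu ^ 2)⁻¹ := by
          rw [← rpow_natCast_mul hmu.le]
          congr 2
          push_cast
          ring
  calc sliceLIntegral mu s u
      ≤ ∫⁻ v : ℝ, ENNReal.ofReal (mu ^ (2 - s)) * ENNReal.ofReal ((v ^ 2 + mu ^ 2)⁻¹) :=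
        lintegral_mono fun v => by
          rw [← ENNReal.ofReal_mul (by positivity)]
          exact ENNReal.ofReal_le_ofReal (hpoint v)
    _ = ENNReal.ofReal (π * mu ^ (1 - s)) := by
        rw [lintegral_const_mul' _ _ ENNReal.ofReal_ne_top, lintegral_inv_sq_add_sq hmu,
          ← ENNReal.ofReal_mul (by positivity), mul_div_left_comm, ← rpow_sub_one hmu.ne']
        ring_nf

end Slice

noncomputable def kappaCoord (lam t : ℝ) : ℝ := lam⁻¹ * (1 - exp (-lam * t))

section Substitution

variable {lam : ℝ}

theorem hasDerivAt_kappaCoord (hlam : lam ≠ 0) (t : ℝ) :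
    HasDerivAt (kappaCoord lam) (exp (-lam * t)) t := by
  have h := (((hasDerivAt_id' t).const_mul (-lam)).exp.const_sub 1).const_mul lam⁻¹
  refine h.congr_deriv ?_
  field_simp

theorem strictMono_kappaCoord (hlam : 0 < lam) : StrictMono (kappaCoord lam) := by
  intro a b hab
  have : exp (-lam * b) < exp (-lam * a) := exp_lt_exp.2 (by nlinarith)
  unfold kappaCoord
  gcongr

theorem range_kappaCoord (hlam : 0 < lam) : range (kappaCoord lam) = Iio lam⁻¹ := by
  ext u
  constructor
  · rintro ⟨t, rfl⟩
    exact mul_lt_of_lt_one_right (inv_pos.2 hlam) (sub_lt_self 1 (exp_pos _))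
  · intro hu
    have hpos : 0 < 1 - lam * u := by
      have := mul_lt_mul_of_pos_left (mem_Iio.1 hu) hlam
      rw [mul_inv_cancel₀ hlam.ne'] at this
      linarith
    have hlog : -lam * (-lam⁻¹ * log (1 - lam * u)) = log (1 - lam * u) := by
      field_simp
    refine ⟨-lam⁻¹ * log (1 - lam * u), ?_⟩
    rw [kappaCoord, hlog, exp_log hpos]
    field_simp
    ring

theorem lintegral_exp_mul_comp_kappaCoord (hlam : 0 < lam) (g : ℝ → ℝ≥0∞) :
    ∫⁻ t, ENNReal.ofReal (exp (-lam * t)) * g (kappaCoord lam t)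
      = ∫⁻ u in Iio lam⁻¹, g u := by
  rw [← range_kappaCoord hlam, ← image_univ, lintegral_image_eq_lintegral_abs_deriv_mul
    MeasurableSet.univ (fun t _ => (hasDerivAt_kappaCoord hlam.ne' t).hasDerivWithinAt)
    (strictMono_kappaCoord hlam).injective.injOn g, Measure.restrict_univ]
  simp only [abs_exp]

end Substitution

noncomputable def kappaDensity (lam mu s : ℝ) (ξ : ℝ × ℝ) : ℝ :=
  exp (-lam * ξ.1) * (lam⁻¹ ^ 2 * (1 - exp (-lam * ξ.1)) ^ 2 + ξ.2 ^ 2 + mu ^ 2) ^ (-s / 2)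

section Density

variable {lam mu s : ℝ}

theorem measurable_kappaDensity : Measurable (kappaDensity lam mu s) := by
  unfold kappaDensity
  fun_prop

theorem kappaDensity_nonneg (ξ : ℝ × ℝ) : 0 ≤ kappaDensity lam mu s ξ := by
  unfold kappaDensity
  positivity

theorem lintegral_kappaDensity (hlam : 0 < lam) :
    ∫⁻ ξ, ENNReal.ofReal (kappaDensity lam mu s ξ)
      = ∫⁻ u in Iio lam⁻¹, sliceLIntegral mu s u := by
  rw [Measure.volume_eq_prod, lintegral_prod _ measurable_kappaDensity.ennreal_ofReal.aemeasurable,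
    ← lintegral_exp_mul_comp_kappaCoord hlam]
  refine lintegral_congr fun t => ?_
  simp_rw [kappaDensity, ENNReal.ofReal_mul (exp_nonneg _)]
  rw [lintegral_const_mul' _ _ ENNReal.ofReal_ne_top, sliceLIntegral, kappaCoord, mul_pow]

theorem ofReal_le_lintegral_kappaDensity (hlam : 0 < lam) (hmu : 0 < mu) (hs : 2 < s) :
    ENNReal.ofReal (π * (mu ^ (2 - s) / (s - 2)))
      ≤ ∫⁻ ξ, ENNReal.ofReal (kappaDensity lam mu s ξ) := by
  rw [lintegral_kappaDensity hlam, ← setLIntegral_Iio_sliceLIntegral hmu hs]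
  exact lintegral_mono_set (Iio_subset_Iio (inv_pos.2 hlam).le)

theorem lintegral_kappaDensity_le (hlam : 0 < lam) (hmu : 0 < mu) (hs : 2 < s) :
    ∫⁻ ξ, ENNReal.ofReal (kappaDensity lam mu s ξ)
      ≤ ENNReal.ofReal (π * (mu ^ (2 - s) / (s - 2)))
        + ENNReal.ofReal (lam⁻¹ * (π * mu ^ (1 - s))) := by
  rw [lintegral_kappaDensity hlam, ← Iio_union_Ico_eq_Iio (inv_pos.2 hlam).le,
    lintegral_union measurableSet_Ico ((Iio_disjoint_Ici le_rfl).mono_right Ico_subset_Ici_self),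
    setLIntegral_Iio_sliceLIntegral hmu hs]
  gcongr
  calc ∫⁻ u in Ico 0 lam⁻¹, sliceLIntegral mu s u
      ≤ ∫⁻ _ in Ico 0 lam⁻¹, ENNReal.ofReal (π * mu ^ (1 - s)) :=
        lintegral_mono fun u => sliceLIntegral_le hmu hs.le u
    _ = ENNReal.ofReal (lam⁻¹ * (π * mu ^ (1 - s))) := by
        rw [setLIntegral_const, Real.volume_Ico, sub_zero, ← ENNReal.ofReal_mul (by positivity),
          mul_comm]

theorem lintegral_kappaDensity_lt_top (hlam : 0 < lam) (hmu : 0 < mu) (hs : 2 < s) :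
    ∫⁻ ξ, ENNReal.ofReal (kappaDensity lam mu s ξ) < ∞ :=
  (lintegral_kappaDensity_le hlam hmu hs).trans_lt
    (ENNReal.add_lt_top.2 ⟨ENNReal.ofReal_lt_top, ENNReal.ofReal_lt_top⟩)

theorem integrable_kappaDensity (hlam : 0 < lam) (hmu : 0 < mu) (hs : 2 < s) :
    Integrable (kappaDensity lam mu s) := by
  refine ⟨measurable_kappaDensity.aestronglyMeasurable, ?_⟩
  rw [hasFiniteIntegral_iff_ofReal (ae_of_all _ kappaDensity_nonneg)]
  exact lintegral_kappaDensity_lt_top hlam hmu hs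

theorem integral_kappaDensity_mem_Icc (hlam : 0 < lam) (hmu : 0 < mu) (hs : 2 < s) :
    ∫ ξ, kappaDensity lam mu s ξ ∈
      Icc (π * (mu ^ (2 - s) / (s - 2)))
        (π * (mu ^ (2 - s) / (s - 2)) + lam⁻¹ * (π * mu ^ (1 - s))) := by
  rw [integral_eq_lintegral_of_nonneg_ae (ae_of_all _ kappaDensity_nonneg)
    measurable_kappaDensity.aestronglyMeasurable]
  constructor
  · exact (ENNReal.ofReal_le_iff_le_toReal (lintegral_kappaDensity_lt_top hlam hmu hs).ne).1
      (ofReal_le_lintegral_kappaDensity hlam hmu hs)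
  · refine ENNReal.toReal_le_of_le_ofReal (by positivity) ?_
    rw [ENNReal.ofReal_add (by positivity) (by positivity)]
    exact lintegral_kappaDensity_le hlam hmu hs

end Density

theorem tendsto_sub_mul_nhdsGT_of_le_of_le {f a b : ℝ → ℝ} {c : ℝ} (ha : ContinuousAt a c)
    (hb : ContinuousAt b c) (hlow : ∀ s, c < s → a s ≤ (s - c) * f s)
    (hupp : ∀ s, c < s → (s - c) * f s ≤ a s + (s - c) * b s) :
    Tendsto (fun s => (s - c) * f s) (𝓝[>] c) (𝓝 (a c)) := by
  have hlim : ContinuousAt (fun s => a s + (s - c) * b s) c := by fun_prop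
  refine tendsto_of_tendsto_of_tendsto_of_le_of_le' (ha.tendsto.mono_left nhdsWithin_le_nhds)
    ?_ (eventually_nhdsWithin_of_forall hlow) (eventually_nhdsWithin_of_forall hupp)
  simpa using hlim.tendsto.mono_left nhdsWithin_le_nhds

theorem cFun_eq (lam mu s : ℝ) :
    cFun lam mu s = (∫ ξ, kappaDensity lam mu s ξ) / (4 * π ^ 2) := by
  rw [cFun, mul_comm, div_eq_mul_inv, zpow_neg, zpow_two]
  congr 1
  ring

section CFun

variable {lam mu s : ℝ}

theorem le_sub_mul_cFun (hlam : 0 < lam) (hmu : 0 < mu) (hs : 2 < s) :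
    mu ^ (2 - s) / (4 * π) ≤ (s - 2) * cFun lam mu s := by
  have hs' : 0 < s - 2 := sub_pos.2 hs
  calc mu ^ (2 - s) / (4 * π) = (s - 2) * (π * (mu ^ (2 - s) / (s - 2)) / (4 * π ^ 2)) := by
        field_simp
    _ ≤ (s - 2) * cFun lam mu s := by
        rw [cFun_eq]
        gcongr
        exact (integral_kappaDensity_mem_Icc hlam hmu hs).1

theorem sub_mul_cFun_le (hlam : 0 < lam) (hmu : 0 < mu) (hs : 2 < s) :
    (s - 2) * cFun lam mu s
      ≤ mu ^ (2 - s) / (4 * π) + (s - 2) * (mu ^ (1 - s) / (4 * π * lam)) := by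
  have hs' : 0 < s - 2 := sub_pos.2 hs
  calc (s - 2) * cFun lam mu s
      ≤ (s - 2) * ((π * (mu ^ (2 - s) / (s - 2)) + lam⁻¹ * (π * mu ^ (1 - s)))
          / (4 * π ^ 2)) := by
        rw [cFun_eq]
        gcongr
        exact (integral_kappaDensity_mem_Icc hlam hmu hs).2
    _ = mu ^ (2 - s) / (4 * π) + (s - 2) * (mu ^ (1 - s) / (4 * π * lam)) := by
        field_simp

end CFun

/-- c(s) is finite for s > 2, and lim_{s→2⁺} (s-2) c(s) = 1/(4π),
independently of μ and λ. -/
theorem stmt19 (lam mu : ℝ) (hlam : 0 < lam) (hmu : 0 < mu) :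
    (∀ s : ℝ, 2 < s →
      Integrable (fun ξ : ℝ × ℝ =>
        Real.exp (-lam * ξ.1) *
          (lam⁻¹ ^ 2 * (1 - Real.exp (-lam * ξ.1)) ^ 2 + ξ.2 ^ 2 + mu ^ 2) ^ (-s / 2 : ℝ))
        (volume : Measure (ℝ × ℝ))) ∧
    Filter.Tendsto (fun s : ℝ => (s - 2) * cFun lam mu s)
      (nhdsWithin 2 (Set.Ioi 2)) (nhds (1 / (4 * Real.pi))) := by
  refine ⟨fun s hs => integrable_kappaDensity hlam hmu hs, ?_⟩
  have h := tendsto_sub_mul_nhdsGT_of_le_of_le (f := cFun lam mu)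
    (a := fun s => mu ^ (2 - s) / (4 * π)) (b := fun s => mu ^ (1 - s) / (4 * π * lam))
    (by fun_prop (disch := positivity)) (by fun_prop (disch := positivity))
    (fun s hs => le_sub_mul_cFun hlam hmu hs) (fun s hs => sub_mul_cFun_le hlam hmu hs)
  simpa using h
end
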